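/- Let α > 0 and let m, k be real numbers with k ≥ 2 and m > 2(α + 1). Then for every r > 0: −h″(r)/h(r) − m·f′(r)·h′(r)/(f(r)·h(r)) − k·G′(r)·h′(r)/(G(r)·h(r)) > 0, where f(r) = r·(1+r²)^(−1/4), G(r) = r/arctan r, and h(r) = (1+r²)^(−α/2). -/

import Mathlib

/-!
The logarithmic derivatives are explicit: `h'/h = -αr/(1+r²)`, `f'/f = (2+r²)/(2r(1+r²))`,
`G'/G = 1/r - 1/((1+r²) arctan r)` and `h''/h = α((α+1)r² - 1)/(1+r²)²`. The quantity is therefore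
`α/(1+r²)²` times `1 - (α+1)r² + m(2+r²)/2 + k(1 + r² - r/arctan r)`. Since `m > 2(α+1)`, the
`m`-term dominates `(α+1)r²`, and the `k`-term is positive because `r/(1+r²) < arctan r`, which for
`θ = arctan r` is `sin 2θ < 2θ`.
-/

noncomputable def f (r : ℝ) : ℝ := r * (1 + r ^ 2) ^ (-(1 / 4 : ℝ))

noncomputable def G (r : ℝ) : ℝ := r / Real.arctan r

noncomputable def h (α r : ℝ) : ℝ := (1 + r ^ 2) ^ (-(α / 2))

open Real

lemma div_one_add_sq_lt_arctan {r : ℝ} (hr : 0 < r) : r / (1 + r ^ 2) < arctan r := by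
  calc r / (1 + r ^ 2) = sin (2 * arctan r) / 2 := by
        rw [sin_two_mul, sin_arctan, cos_arctan]
        field_simp
        rw [sq_sqrt (by positivity)]
    _ < 2 * arctan r / 2 := by gcongr; exact sin_lt (by positivity)
    _ = arctan r := by ring

lemma hasDerivAt_one_add_sq (x : ℝ) : HasDerivAt (fun y : ℝ => 1 + y ^ 2) (2 * x) x := by
  simpa using (hasDerivAt_pow 2 x).const_add 1

lemma hasDerivAt_one_add_sq_rpow (p x : ℝ) :
    HasDerivAt (fun y : ℝ => (1 + y ^ 2) ^ p) (2 * p * x / (1 + x ^ 2) * (1 + x ^ 2) ^ p) x := by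
  refine ((hasDerivAt_one_add_sq x).rpow_const (Or.inl (by positivity))).congr_deriv ?_
  rw [rpow_sub (by positivity), rpow_one]
  ring

lemma h_pos (α r : ℝ) : 0 < h α r := rpow_pos_of_pos (by positivity) _

lemma hasDerivAt_h (α r : ℝ) : HasDerivAt (h α) (-α * r / (1 + r ^ 2) * h α r) r := by
  refine (hasDerivAt_one_add_sq_rpow (-(α / 2)) r).congr_deriv ?_
  rw [h]
  ring

lemma deriv_h_div_h (α r : ℝ) : deriv (h α) r / h α r = -α * r / (1 + r ^ 2) := by
  rw [(hasDerivAt_h α r).deriv, mul_div_assoc, div_self (h_pos α r).ne', mul_one]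

lemma deriv_deriv_h_div_h (α r : ℝ) :
    deriv (deriv (h α)) r / h α r = α * ((α + 1) * r ^ 2 - 1) / (1 + r ^ 2) ^ 2 := by
  have hq := ((hasDerivAt_id' r).const_mul (-α)).fun_div (hasDerivAt_one_add_sq r)
    (by positivity)
  have hd : deriv (h α) = fun x => -α * x / (1 + x ^ 2) * h α x :=
    funext fun x => (hasDerivAt_h α x).deriv
  rw [hd, (hq.fun_mul (hasDerivAt_h α r)).deriv]
  have := (h_pos α r).ne'
  field_simp
  ring

lemma deriv_f_div_f {r : ℝ} (hr : r ≠ 0) :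
    deriv f r / f r = (2 + r ^ 2) / (2 * r * (1 + r ^ 2)) := by
  have hf : HasDerivAt f _ r := (hasDerivAt_id' r).fun_mul (hasDerivAt_one_add_sq_rpow _ r)
  have : (1 + r ^ 2) ^ (-(1 / 4 : ℝ)) ≠ 0 := (rpow_pos_of_pos (by positivity) _).ne'
  rw [hf.deriv, f]
  field_simp
  ring

lemma deriv_G_div_G {r : ℝ} (hr : r ≠ 0) :
    deriv G r / G r = 1 / r - 1 / ((1 + r ^ 2) * arctan r) := by
  have hT : arctan r ≠ 0 := arctan_eq_zero_iff.not.mpr hr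
  have hG : HasDerivAt G _ r := (hasDerivAt_id' r).fun_div (hasDerivAt_arctan r) hT
  rw [hG.deriv, G]
  field_simp

/-- Ricci curvature positivity in the `S¹` direction: if `k ≥ 2` and `m > 2(α+1)`, then
`−h″/h − m·f′h′/(fh) − k·G′h′/(Gh) > 0` for all `r > 0`. -/
theorem statement13 (α : ℝ) (hα : 0 < α) (m k : ℝ) (hk : 2 ≤ k)
    (hm : m > 2 * (α + 1)) :
    ∀ r : ℝ, 0 < r →
      -(deriv (deriv (h α)) r / h α r)
        - m * (deriv f r * deriv (h α) r / (f r * h α r))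
        - k * (deriv G r * deriv (h α) r / (G r * h α r)) > 0 := by
  intro r hr
  rw [mul_div_mul_comm, mul_div_mul_comm, deriv_deriv_h_div_h, deriv_h_div_h,
    deriv_f_div_f hr.ne', deriv_G_div_G hr.ne']
  have hT : 0 < arctan r := arctan_pos.mpr hr
  have hk_term : 0 < 1 + r ^ 2 - r / arctan r := by
    have := div_one_add_sq_lt_arctan hr
    rw [div_lt_iff₀ (by positivity)] at this
    rw [sub_pos, div_lt_iff₀ hT]
    linarith
  have hbracket :
      0 < 1 - (α + 1) * r ^ 2 + m * (2 + r ^ 2) / 2 + k * (1 + r ^ 2 - r / arctan r) := by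
    nlinarith [mul_nonneg (by linarith : (0:ℝ) ≤ k) hk_term.le,
      mul_pos (sub_pos.mpr hm) (by positivity : (0:ℝ) < 2 + r ^ 2)]
  calc _ = α / (1 + r ^ 2) ^ 2 *
        (1 - (α + 1) * r ^ 2 + m * (2 + r ^ 2) / 2 + k * (1 + r ^ 2 - r / arctan r)) := by
        field_simp
        ring
    _ > 0 := by positivity
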